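/- arXiv:1311.5067 — 2 statements merged into one kernel-verified Lean document; each statement's English description precedes it below -/
import Mathlib

section
/- For all 1 ≤ k ≤ n, B_{n,k} = Σ_{r=0}^{k} binomial(n,r) · X₁^r · B̃_{n−r,k−r}, where B̃_{m,j} denotes the associated Bell polynomial obtained from B_{m,j} by setting X₁ = 0. -/
open Finset MvPolynomial

/-- The set of (n,k)-partition types: tuples (r₁,…,rₙ) (rⱼ = r (j-1)) with Σ rᵢ = k, Σ i·rᵢ = n. -/
def ptypes (n k : ℕ) : Finset (Fin n → ℕ) :=
  (Fintype.piFinset fun _ : Fin n => Finset.range (n + 1)).filter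
    fun r => (∑ i, r i) = k ∧ (∑ i, (i.1 + 1) * r i) = n

/-- Denominator of the Faà di Bruno coefficient: ∏ rᵢ!·(i!)^{rᵢ}. -/
def bruDenom {n : ℕ} (r : Fin n → ℕ) : ℕ :=
  ∏ i, (r i).factorial * ((i.1 + 1).factorial) ^ (r i)

/-- Partial exponential Bell polynomial (variable `X j` stands for X_{j+1}). -/
noncomputable def Bell (n k : ℕ) : MvPolynomial ℕ ℤ :=
  ∑ r ∈ ptypes n k,
    C ((n.factorial / bruDenom r : ℕ) : ℤ) * ∏ i, (X i.1 : MvPolynomial ℕ ℤ) ^ (r i)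

/-- Associated Bell polynomial: Bell with X₁ (= `X 0`) set to 0. -/
noncomputable def BellT (n k : ℕ) : MvPolynomial ℕ ℤ :=
  aeval (fun j => if j = 0 then 0 else (X j : MvPolynomial ℕ ℤ)) (Bell n k)

/-- Signed Stirling numbers of the first kind. -/
def s1 : ℕ → ℕ → ℤ
  | 0, 0 => 1
  | 0, _ + 1 => 0
  | _ + 1, 0 => 0
  | n + 1, k + 1 => s1 n k - n * s1 n (k + 1)

/-- Stirling numbers of the second kind. -/
def s2 : ℕ → ℕ → ℤ
  | 0, 0 => 1
  | 0, _ + 1 => 0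
  | _ + 1, 0 => 0
  | n + 1, k + 1 => s2 n k + (k + 1) * s2 n (k + 1)

/-- Unsigned Stirling numbers of the first kind (cycle numbers). -/
def cyc : ℕ → ℕ → ℕ
  | 0, 0 => 1
  | 0, _ + 1 => 0
  | _ + 1, 0 => 0
  | n + 1, k + 1 => cyc n k + n * cyc n (k + 1)

/-- First entry r₁ of a partition type (0 if the tuple is empty). -/
def firstEntry {m : ℕ} (r : Fin m → ℕ) : ℕ :=
  ∑ i ∈ Finset.univ.filter (fun i : Fin m => i.1 = 0), r i

/-- Multivariate Stirling polynomials of the first kind, via the differential recurrence. -/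
noncomputable def Spoly : ℕ → ℕ → MvPolynomial ℕ ℤ
  | 0, _ => 0
  | 1, k => if k = 1 then 1 else 0
  | n + 2, k =>
    if k = 0 then 0 else
      C (-(2 * (n : ℤ) + 1)) * X 1 * Spoly (n + 1) k
        + X 0 * (Spoly (n + 1) (k - 1)
          + ∑ j ∈ Finset.Icc 1 ((n + 1) - k + 1),
              X j * pderiv (j - 1) (Spoly (n + 1) k))


section helpers

variable {M : Type*}

lemma split_prod [CommMonoid M] {n m : ℕ} (hmn : m ≤ n) (hn : 0 < n)
    (g : ℕ → M) (hg : ∀ x, m ≤ x → x ≠ 0 → g x = 1) :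
    ∏ x ∈ Finset.range n, g x = g 0 * ∏ x ∈ Finset.range m, (if x = 0 then 1 else g x) := by
  rw [← Finset.mul_prod_erase _ g (Finset.mem_range.2 hn)]
  congr 1
  have h1 : ∏ x ∈ (Finset.range m).erase 0, g x = ∏ x ∈ (Finset.range n).erase 0, g x :=
    Finset.prod_subset (Finset.erase_subset_erase 0 (Finset.range_subset_range.2 hmn))
      (fun x hx hxn => hg x
        (le_of_not_gt fun hlt => hxn
          (Finset.mem_erase.2 ⟨Finset.ne_of_mem_erase hx, Finset.mem_range.2 hlt⟩))
        (Finset.ne_of_mem_erase hx))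
  calc ∏ x ∈ (Finset.range n).erase 0, g x
      = ∏ x ∈ (Finset.range m).erase 0, g x := h1.symm
    _ = ∏ x ∈ (Finset.range m).erase 0, (if x = 0 then 1 else g x) :=
        Finset.prod_congr rfl fun x hx => (if_neg (Finset.ne_of_mem_erase hx)).symm
    _ = ∏ x ∈ Finset.range m, (if x = 0 then 1 else g x) :=
        Finset.prod_erase _ (if_pos rfl)

lemma split_sum [AddCommMonoid M] {n m : ℕ} (hmn : m ≤ n) (hn : 0 < n)
    (g : ℕ → M) (hg : ∀ x, m ≤ x → x ≠ 0 → g x = 0) :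
    ∑ x ∈ Finset.range n, g x = g 0 + ∑ x ∈ Finset.range m, (if x = 0 then 0 else g x) := by
  rw [← Finset.add_sum_erase _ g (Finset.mem_range.2 hn)]
  congr 1
  have h1 : ∑ x ∈ (Finset.range m).erase 0, g x = ∑ x ∈ (Finset.range n).erase 0, g x :=
    Finset.sum_subset (Finset.erase_subset_erase 0 (Finset.range_subset_range.2 hmn))
      (fun x hx hxn => hg x
        (le_of_not_gt fun hlt => hxn
          (Finset.mem_erase.2 ⟨Finset.ne_of_mem_erase hx, Finset.mem_range.2 hlt⟩))
        (Finset.ne_of_mem_erase hx))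
  calc ∑ x ∈ (Finset.range n).erase 0, g x
      = ∑ x ∈ (Finset.range m).erase 0, g x := h1.symm
    _ = ∑ x ∈ (Finset.range m).erase 0, (if x = 0 then 0 else g x) :=
        Finset.sum_congr rfl fun x hx => (if_neg (Finset.ne_of_mem_erase hx)).symm
    _ = ∑ x ∈ Finset.range m, (if x = 0 then 0 else g x) :=
        Finset.sum_erase _ (if_pos rfl)

end helpers

/-- the backward map of the bijection -/
def psi (n m r : ℕ) (s : Fin m → ℕ) : Fin n → ℕ :=
  fun i => if i.1 = 0 then r else if h : i.1 < m then s ⟨i.1, h⟩ else 0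

/-- the forward map of the bijection -/
def phi (n m : ℕ) (hmn : m ≤ n) (p : Fin n → ℕ) : Fin m → ℕ :=
  fun i => if i.1 = 0 then 0 else p ⟨i.1, lt_of_lt_of_le i.2 hmn⟩

lemma prod_psi {M : Type*} [CommMonoid M] {n m : ℕ} (r : ℕ) (hmn : m ≤ n) (hn : 0 < n)
    (s : Fin m → ℕ) (hs : ∀ i : Fin m, i.1 = 0 → s i = 0)
    (G : ℕ → ℕ → M) (hG : ∀ x, G x 0 = 1) :
    ∏ i : Fin n, G i.1 (psi n m r s i) = G 0 r * ∏ i : Fin m, G i.1 (s i) := by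
  set g : ℕ → M := fun x => G x (if x = 0 then r else if h : x < m then s ⟨x, h⟩ else 0) with hgdef
  have h1 : ∏ i : Fin n, G i.1 (psi n m r s i) = ∏ x ∈ Finset.range n, g x := by
    rw [← Fin.prod_univ_eq_prod_range g n]
    exact Finset.prod_congr rfl fun i _ => rfl
  have h2 : ∏ i : Fin m, G i.1 (s i)
      = ∏ x ∈ Finset.range m, (if x = 0 then 1 else g x) := by
    rw [← Fin.prod_univ_eq_prod_range (fun x => if x = 0 then 1 else g x) m]
    refine Finset.prod_congr rfl fun i _ => ?_
    rcases eq_or_ne i.1 0 with h0 | h0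
    · rw [if_pos h0, hs i h0, hG]
    · rw [if_neg h0]
      simp only [hgdef, if_neg h0, dif_pos i.2, Fin.eta]
  rw [h1, h2, split_prod hmn hn g (fun x hmx hx0 => by
    simp only [hgdef, if_neg hx0, dif_neg (not_lt.2 hmx)]; exact hG x)]
  congr 1

lemma sum_psi {M : Type*} [AddCommMonoid M] {n m : ℕ} (r : ℕ) (hmn : m ≤ n) (hn : 0 < n)
    (s : Fin m → ℕ) (hs : ∀ i : Fin m, i.1 = 0 → s i = 0)
    (G : ℕ → ℕ → M) (hG : ∀ x, G x 0 = 0) :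
    ∑ i : Fin n, G i.1 (psi n m r s i) = G 0 r + ∑ i : Fin m, G i.1 (s i) := by
  set g : ℕ → M := fun x => G x (if x = 0 then r else if h : x < m then s ⟨x, h⟩ else 0) with hgdef
  have h1 : ∑ i : Fin n, G i.1 (psi n m r s i) = ∑ x ∈ Finset.range n, g x := by
    rw [← Fin.sum_univ_eq_sum_range g n]
    exact Finset.sum_congr rfl fun i _ => rfl
  have h2 : ∑ i : Fin m, G i.1 (s i)
      = ∑ x ∈ Finset.range m, (if x = 0 then 0 else g x) := by
    rw [← Fin.sum_univ_eq_sum_range (fun x => if x = 0 then 0 else g x) m]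
    refine Finset.sum_congr rfl fun i _ => ?_
    rcases eq_or_ne i.1 0 with h0 | h0
    · rw [if_pos h0, hs i h0, hG]
    · rw [if_neg h0]
      simp only [hgdef, if_neg h0, dif_pos i.2, Fin.eta]
  rw [h1, h2, split_sum hmn hn g (fun x hmx hx0 => by
    simp only [hgdef, if_neg hx0, dif_neg (not_lt.2 hmx)]; exact hG x)]
  congr 1

lemma bruDenom_dvd {m : ℕ} (s : Fin m → ℕ) {N : ℕ} (h : (∑ i, (i.1 + 1) * s i) = N) :
    bruDenom s ∣ N.factorial := by
  have h1 : ∀ i ∈ (Finset.univ : Finset (Fin m)),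
      (s i).factorial * ((i.1 + 1).factorial) ^ (s i) ∣ ((i.1 + 1) * s i).factorial := by
    intro i _
    have hb := Nat.uniformBell_mul_eq (s i) (n := i.1 + 1) (Nat.succ_ne_zero _)
    rw [mul_comm (i.1 + 1) (s i)]
    exact ⟨Nat.uniformBell (s i) (i.1 + 1), by rw [← hb]; ring⟩
  calc bruDenom s ∣ ∏ i : Fin m, ((i.1 + 1) * s i).factorial :=
        Finset.prod_dvd_prod_of_dvd _ _ h1
    _ ∣ (∑ i : Fin m, (i.1 + 1) * s i).factorial :=
        Nat.prod_factorial_dvd_factorial_sum _ _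
    _ = N.factorial := by rw [h]

lemma coeff_split {n r D : ℕ} (hrn : r ≤ n) (hD : D ∣ (n - r).factorial) :
    n.factorial / (r.factorial * D) = n.choose r * ((n - r).factorial / D) := by
  obtain ⟨t, ht⟩ := hD
  have hDpos : 0 < D := by
    rcases Nat.eq_zero_or_pos D with h0 | h0
    · rw [h0, zero_mul] at ht
      exact absurd ht (n - r).factorial_ne_zero
    · exact h0
  have hn : n.factorial = n.choose r * r.factorial * (n - r).factorial :=
    (Nat.choose_mul_factorial_mul_factorial hrn).symm
  rw [hn, ht, Nat.mul_div_cancel_left _ hDpos]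
  calc n.choose r * r.factorial * (D * t) / (r.factorial * D)
      = r.factorial * D * (n.choose r * t) / (r.factorial * D) := by ring_nf
    _ = n.choose r * t := Nat.mul_div_cancel_left _ (by positivity)

lemma mem_ptypes {n' k' : ℕ} {p : Fin n' → ℕ} :
    p ∈ ptypes n' k' ↔ (∑ i, p i) = k' ∧ (∑ i, (i.1 + 1) * p i) = n' := by
  simp only [ptypes, Finset.mem_filter, Fintype.mem_piFinset, Finset.mem_range]
  constructor
  · rintro ⟨-, h⟩; exact h
  · rintro ⟨h1, h2⟩
    refine ⟨fun i => Nat.lt_succ_of_le ?_, h1, h2⟩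
    calc p i ≤ ∑ j, p j := Finset.single_le_sum (fun j _ => Nat.zero_le _) (Finset.mem_univ i)
      _ ≤ ∑ j : Fin n', (j.1 + 1) * p j :=
          Finset.sum_le_sum fun j _ => Nat.le_mul_of_pos_left _ (Nat.succ_pos _)
      _ = n' := h2

lemma firstEntry_eq_zero {m : ℕ} {s : Fin m → ℕ} :
    firstEntry s = 0 ↔ ∀ i : Fin m, i.1 = 0 → s i = 0 := by
  simp [firstEntry, Finset.sum_eq_zero_iff]

lemma BellT_eq (m j : ℕ) :
    BellT m j = ∑ s ∈ (ptypes m j).filter (fun s => firstEntry s = 0),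
      C ((m.factorial / bruDenom s : ℕ) : ℤ) * ∏ i, (X i.1 : MvPolynomial ℕ ℤ) ^ (s i) := by
  classical
  rw [BellT, Bell, map_sum]
  refine Eq.trans (Finset.sum_subset (Finset.filter_subset _ (ptypes m j)) ?_).symm
    (Finset.sum_congr rfl fun s hs => ?_)
  · intro s hs hsn
    have hne : ¬∀ i : Fin m, i.1 = 0 → s i = 0 := fun h =>
      hsn (Finset.mem_filter.2 ⟨hs, firstEntry_eq_zero.2 h⟩)
    push_neg at hne
    obtain ⟨i, hi0, hsi⟩ := hne
    rw [map_mul, map_prod]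
    have : (aeval fun j => if j = 0 then 0 else (X j : MvPolynomial ℕ ℤ))
        ((X i.1 : MvPolynomial ℕ ℤ) ^ s i) = 0 := by
      rw [map_pow, aeval_X, hi0, if_pos rfl, zero_pow hsi]
    rw [Finset.prod_eq_zero (Finset.mem_univ i) this, mul_zero]
  · obtain ⟨-, hs0'⟩ := Finset.mem_filter.1 hs
    have hs0 := firstEntry_eq_zero.1 hs0'
    rw [map_mul, aeval_C, algebraMap_eq, map_prod]
    refine congrArg₂ (· * ·) rfl (Finset.prod_congr rfl fun i _ => ?_)
    rw [map_pow, aeval_X]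
    rcases eq_or_ne i.1 0 with h0 | h0
    · simp [h0, hs0 i h0]
    · simp [h0]

lemma psi_inv {n r : ℕ} (hn : 0 < n) (hrn : r ≤ n) (hmn : n - r ≤ n) {p : Fin n → ℕ}
    (hw : (∑ i, (i.1 + 1) * p i) = n) (hp0 : p ⟨0, hn⟩ = r) :
    psi n (n - r) r (phi n (n - r) hmn p) = p := by
  funext i
  simp only [psi, phi]
  rcases eq_or_ne i.1 0 with h0 | h0
  · rw [if_pos h0]
    have hi : i = ⟨0, hn⟩ := Fin.ext h0
    rw [hi, hp0]
  · rw [if_neg h0]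
    by_cases hlt : i.1 < n - r
    · rw [dif_pos hlt, if_neg h0]
    · rw [dif_neg hlt]
      by_contra hpi
      have hpi' : p i ≠ 0 := fun h => hpi h.symm
      have hne : i ≠ ⟨0, hn⟩ := fun h => h0 (by rw [h])
      have hle : (∑ j ∈ ({i, ⟨0, hn⟩} : Finset (Fin n)), (j.1 + 1) * p j)
          ≤ ∑ j, (j.1 + 1) * p j :=
        Finset.sum_le_sum_of_subset (Finset.subset_univ _)
      rw [Finset.sum_pair hne] at hle
      have h1 : n - r + 1 ≤ (i.1 + 1) * p i :=
        le_trans (by omega) (Nat.le_mul_of_pos_right _ (Nat.pos_of_ne_zero hpi'))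
      rw [hw, hp0] at hle
      simp only at hle
      omega

lemma phi_inv {n m r : ℕ} (hmn : m ≤ n) {s : Fin m → ℕ}
    (hs : ∀ i : Fin m, i.1 = 0 → s i = 0) :
    phi n m hmn (psi n m r s) = s := by
  funext i
  simp only [phi, psi]
  rcases eq_or_ne i.1 0 with h0 | h0
  · rw [if_pos h0, (hs i h0)]
  · rw [if_neg h0, if_neg h0, dif_pos i.2]

lemma fiber_eq {n k : ℕ} (r : ℕ) (hn : 0 < n) (hrk : r ≤ k) (hkn : k ≤ n) :
    ∑ p ∈ (ptypes n k).filter (fun p => p ⟨0, hn⟩ = r),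
        C ((n.factorial / bruDenom p : ℕ) : ℤ) * ∏ i, (X i.1 : MvPolynomial ℕ ℤ) ^ p i
      = C ((n.choose r : ℤ)) * X 0 ^ r * BellT (n - r) (k - r) := by
  classical
  have hrn : r ≤ n := hrk.trans hkn
  have hmn : n - r ≤ n := Nat.sub_le n r
  rw [BellT_eq, Finset.mul_sum]
  refine Finset.sum_nbij' (phi n (n - r) hmn) (psi n (n - r) r) ?_ ?_ ?_ ?_ ?_
  · -- maps to
    intro p hp
    obtain ⟨hpt, hp0⟩ := Finset.mem_filter.1 hp
    obtain ⟨hsum1, hsum2⟩ := mem_ptypes.1 hpt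
    have hs : ∀ i : Fin (n - r), i.1 = 0 → phi n (n - r) hmn p i = 0 :=
      fun i h0 => by simp [phi, h0]
    have hps : psi n (n - r) r (phi n (n - r) hmn p) = p := psi_inv hn hrn hmn hsum2 hp0
    have e1 : (∑ i : Fin n, psi n (n - r) r (phi n (n - r) hmn p) i)
        = r + ∑ i : Fin (n - r), phi n (n - r) hmn p i :=
      sum_psi r hmn hn _ hs (fun _ v => v) (fun _ => rfl)
    have e2 : (∑ i : Fin n, (i.1 + 1) * psi n (n - r) r (phi n (n - r) hmn p) i)
        = (0 + 1) * r + ∑ i : Fin (n - r), (i.1 + 1) * phi n (n - r) hmn p i :=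
      sum_psi r hmn hn _ hs (fun x v => (x + 1) * v) (fun _ => by simp)
    rw [hps, hsum1] at e1
    rw [hps, hsum2] at e2
    exact Finset.mem_filter.2 ⟨mem_ptypes.2 ⟨by omega, by omega⟩, firstEntry_eq_zero.2 hs⟩
  · -- maps back
    intro s hsm
    obtain ⟨hst, hs0'⟩ := Finset.mem_filter.1 hsm
    have hs := firstEntry_eq_zero.1 hs0'
    obtain ⟨hsum1, hsum2⟩ := mem_ptypes.1 hst
    have e1 : (∑ i : Fin n, psi n (n - r) r s i)
        = r + ∑ i : Fin (n - r), s i :=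
      sum_psi r hmn hn _ hs (fun _ v => v) (fun _ => rfl)
    have e2 : (∑ i : Fin n, (i.1 + 1) * psi n (n - r) r s i)
        = (0 + 1) * r + ∑ i : Fin (n - r), (i.1 + 1) * s i :=
      sum_psi r hmn hn _ hs (fun x v => (x + 1) * v) (fun _ => by simp)
    rw [hsum1] at e1
    rw [hsum2] at e2
    refine Finset.mem_filter.2 ⟨mem_ptypes.2 ⟨by omega, by omega⟩, ?_⟩
    simp [psi]
  · -- left inverse
    intro p hp
    obtain ⟨hpt, hp0⟩ := Finset.mem_filter.1 hp
    obtain ⟨-, hsum2⟩ := mem_ptypes.1 hpt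
    exact psi_inv hn hrn hmn hsum2 hp0
  · -- right inverse
    intro s hsm
    obtain ⟨-, hs0'⟩ := Finset.mem_filter.1 hsm
    exact phi_inv hmn (firstEntry_eq_zero.1 hs0')
  · -- summand equality
    intro p hp
    obtain ⟨hpt, hp0⟩ := Finset.mem_filter.1 hp
    obtain ⟨hsum1, hsum2⟩ := mem_ptypes.1 hpt
    set s : Fin (n - r) → ℕ := phi n (n - r) hmn p with hsdef
    have hs : ∀ i : Fin (n - r), i.1 = 0 → s i = 0 := fun i h0 => by simp [hsdef, phi, h0]
    have hps : psi n (n - r) r s = p := psi_inv hn hrn hmn hsum2 hp0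
    have e2 : (∑ i : Fin n, (i.1 + 1) * psi n (n - r) r s i)
        = (0 + 1) * r + ∑ i : Fin (n - r), (i.1 + 1) * s i :=
      sum_psi r hmn hn _ hs (fun x v => (x + 1) * v) (fun _ => by simp)
    rw [hps, hsum2] at e2
    have hsw : (∑ i : Fin (n - r), (i.1 + 1) * s i) = n - r := by omega
    have hD : bruDenom s ∣ (n - r).factorial := bruDenom_dvd s hsw
    have hb : bruDenom (psi n (n - r) r s) = r.factorial * bruDenom s := by
      have h := prod_psi (M := ℕ) r hmn hn s hs
        (fun x v => v.factorial * ((x + 1).factorial) ^ v) (fun x => by simp)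
      simpa [bruDenom, Nat.factorial_one] using h
    have hm : (∏ i : Fin n, (X i.1 : MvPolynomial ℕ ℤ) ^ psi n (n - r) r s i)
        = X 0 ^ r * ∏ i : Fin (n - r), (X i.1 : MvPolynomial ℕ ℤ) ^ s i :=
      prod_psi r hmn hn s hs (fun x v => (X x : MvPolynomial ℕ ℤ) ^ v) (fun x => pow_zero _)
    conv_lhs => rw [← hps]
    rw [hb, coeff_split hrn hD, hm]
    rw [Nat.cast_mul, map_mul]
    ring

theorem bell_eq_sum_assoc (n k : ℕ) (hk : 1 ≤ k) (hkn : k ≤ n) :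
    Bell n k = ∑ r ∈ Finset.range (k + 1),
      C ((n.choose r : ℤ)) * X 0 ^ r * BellT (n - r) (k - r) := by
  have hn : 0 < n := lt_of_lt_of_le hk hkn
  have hmaps : ∀ p ∈ ptypes n k, p ⟨0, hn⟩ ∈ Finset.range (k + 1) := by
    intro p hp
    obtain ⟨h1, -⟩ := mem_ptypes.1 hp
    exact Finset.mem_range.2 (Nat.lt_succ_of_le
      (h1 ▸ Finset.single_le_sum (fun j _ => Nat.zero_le _) (Finset.mem_univ _)))
  rw [Bell, ← Finset.sum_fiberwise_of_maps_to hmaps]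
  exact Finset.sum_congr rfl fun r hr =>
    fiber_eq r hn (Nat.lt_succ_iff.1 (Finset.mem_range.1 hr)) hkn
end

section
/- The Stirling numbers of the second kind can be written as a signed sum over partition types: s₂(n,k) = Σ over (2n−1−k, n−1)-partition types (r₁,…,r_{n−k+1}) of (−1)^{r₁−k+1} · (binomial(2n−2,k−1)/binomial(2n−2,r₁)) · ω(r)/(1^{r₁}·2^{r₂}⋯), where ω(r) = (Σi·rᵢ)!/(r₁!·r₂!⋯). -/
open Finset MvPolynomial

/-!
Group the types `r` of `m` with `j` parts by `f = r₁`. Such a type is `f` fixed points together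
with a fixed-point-free type of `m - f` with `j - f` cycles, and by Cauchy's formula `m! / z_r`
counts the permutations of type `r`; so the types with `r₁ = f` contribute
`C(m, f) · d(m - f, j - f)`, where `d(M, C)` counts the derangements of `M` points with `C`
cycles. Removing one cycle of length `i` turns `i · rᵢ / z_r` into `1 / z_{r'}`, which gives the
recurrence `d(M, C) = (M - 1) (d(M - 1, C) + d(M - 2, C - 1))`.
For `m = 2n - 1 - k`, `j = n - 1` the binomial factors collapse to `C(2n - 2 - f, k - 1)`, and
with `u = n - 1 - f` the right-hand side becomes
`∑ᵤ (-1)^(n-k-u) C(n - 1 + u, k - 1) d(n - k + u, u)`, which satisfies the recurrence of `s2`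
because `d` satisfies its own.
-/

open scoped Nat

/-- Associated Stirling numbers of the first kind: permutations of `M` points with `C` cycles
and no fixed points. -/
def assocCyc : ℕ → ℕ → ℕ
  | 0, 0 => 1
  | 0, _ + 1 => 0
  | 1, _ => 0
  | _ + 2, 0 => 0
  | M + 2, C + 1 => (M + 1) * (assocCyc (M + 1) (C + 1) + assocCyc M C)

lemma assocCyc_zero_right {M : ℕ} (hM : 0 < M) : assocCyc M 0 = 0 :=
  match M, hM with
  | 1, _ => rfl
  | _ + 2, _ => rfl

lemma assocCyc_eq_zero_of_lt_two_mul : ∀ {M C : ℕ}, M < 2 * C → assocCyc M C = 0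
  | 0, _ + 1, _ => rfl
  | 1, _, _ => rfl
  | M + 2, C + 1, h => by
    simp [assocCyc, assocCyc_eq_zero_of_lt_two_mul (M := M + 1) (C := C + 1) (by omega),
      assocCyc_eq_zero_of_lt_two_mul (M := M) (C := C) (by omega)]

lemma s2_succ_succ (n k : ℕ) : s2 (n + 1) (k + 1) = s2 n k + (k + 1) * s2 n (k + 1) := rfl

lemma s2_eq_zero_of_lt : ∀ {n k : ℕ}, n < k → s2 n k = 0
  | 0, _ + 1, _ => rfl
  | n + 1, k + 1, h => by
    rw [s2_succ_succ, s2_eq_zero_of_lt (by omega), s2_eq_zero_of_lt (n := n) (by omega)]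
    ring

lemma s2_self : ∀ n : ℕ, s2 n n = 1
  | 0 => rfl
  | n + 1 => by rw [s2_succ_succ, s2_self n, s2_eq_zero_of_lt (Nat.lt_succ_self n)]; ring

def stirlingAssocSum (N k : ℕ) : ℤ :=
  ∑ u ∈ range (N + 1), (-1) ^ (N - u) * ((N + k + u).choose k : ℤ) * assocCyc (N + u) u

lemma sum_range_shift_assocCyc (N k : ℕ) :
    ∑ u ∈ range (N + 1), (-1) ^ (N - u) * ((N + k + (u + 1)).choose k : ℤ) *
        (N + (u + 1) : ℕ) * assocCyc (N + (u + 1)) (u + 1)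
      = ∑ u ∈ range (N + 1),
          (-1) ^ (N + 1 - u) * ((N + k + u).choose k : ℤ) * (N + u : ℕ) *
            assocCyc (N + u) u := by
  set g : ℕ → ℤ := fun u =>
    (-1) ^ (N + 1 - u) * ((N + k + u).choose k : ℤ) * (N + u : ℕ) * assocCyc (N + u) u with hg
  have hg0 : g 0 = 0 := by
    rcases Nat.eq_zero_or_pos N with rfl | hN
    · simp [hg]
    · simp [hg, assocCyc_zero_right hN]
  have hgN : g (N + 1) = 0 := by
    simp [hg, assocCyc_eq_zero_of_lt_two_mul (show N + (N + 1) < 2 * (N + 1) by omega)]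
  have h := sum_range_succ' g (N + 1)
  rw [sum_range_succ, hgN, hg0, add_zero, add_zero] at h
  simpa [hg] using h.symm

/-- Expanding `assocCyc (N + 1 + u) u` by its recurrence, the part with `assocCyc (N + u) u` of
the `u`-th term telescopes against the rest of the `(u + 1)`-st term. -/
lemma sum_assocCyc_succ_eq_mul_stirlingAssocSum (N k : ℕ) :
    ∑ u ∈ range (N + 2),
        (-1) ^ (N + 1 - u) * ((N + k + u).choose k : ℤ) * assocCyc (N + 1 + u) u
      = (k + 1) * stirlingAssocSum N k := by
  have hrec (u : ℕ) : (assocCyc (N + 1 + (u + 1)) (u + 1) : ℤ)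
      = (N + (u + 1) : ℕ) * (assocCyc (N + (u + 1)) (u + 1) + assocCyc (N + u) u) := by
    rw [show N + 1 + (u + 1) = N + u + 2 by omega, assocCyc, ← add_assoc]
    push_cast
    ring
  rw [sum_range_succ', stirlingAssocSum, mul_sum]
  simp only [assocCyc_zero_right (show 0 < N + 1 + 0 by omega), Nat.cast_zero, mul_zero, add_zero,
    Nat.add_sub_add_right, hrec, mul_add, sum_add_distrib, ← mul_assoc]
  rw [sum_range_shift_assocCyc, ← sum_add_distrib]
  refine sum_congr rfl fun u hu => ?_
  have hc : ((N + k + u).choose k : ℤ) * (N + k + u + 1 : ℕ)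
      = ((N + k + (u + 1)).choose k : ℤ) * (N + (u + 1) : ℕ) := by
    have := Nat.choose_mul_succ_eq (N + k + u) k
    rw [show N + k + u + 1 - k = N + (u + 1) by omega] at this
    exact_mod_cast this
  rw [show N + 1 - u = N - u + 1 by simp at hu; omega, pow_succ]
  push_cast at hc ⊢
  linear_combination -(-1) ^ (N - u) * (assocCyc (N + u) u : ℤ) * hc

lemma stirlingAssocSum_succ_succ (N k : ℕ) :
    stirlingAssocSum (N + 1) (k + 1) = stirlingAssocSum (N + 1) k +
      ∑ u ∈ range (N + 2),
        (-1) ^ (N + 1 - u) * ((N + (k + 1) + u).choose (k + 1) : ℤ) * assocCyc (N + 1 + u) u := by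
  rw [stirlingAssocSum, stirlingAssocSum, ← sum_add_distrib]
  refine sum_congr rfl fun u _ => ?_
  rw [show N + 1 + (k + 1) + u = N + 1 + k + u + 1 by omega, Nat.choose_succ_succ,
    show N + (k + 1) + u = N + 1 + k + u by omega]
  push_cast
  ring

theorem s2_eq_stirlingAssocSum : ∀ N k : ℕ, s2 (N + k + 1) (k + 1) = stirlingAssocSum N k
  | 0, k => by simp [stirlingAssocSum, s2_self, assocCyc]
  | N + 1, 0 => by
    have hstep := sum_assocCyc_succ_eq_mul_stirlingAssocSum N 0
    simp only [Nat.choose_zero_right, Nat.cast_one, mul_one, Nat.cast_zero, zero_add,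
      one_mul] at hstep
    rw [s2_succ_succ, s2_eq_stirlingAssocSum N 0, ← hstep, stirlingAssocSum]
    simp [s2]
  | N + 1, k + 1 => by
    have h := s2_eq_stirlingAssocSum N (k + 1)
    rw [show N + (k + 1) + 1 = N + 1 + k + 1 by omega] at h
    rw [show N + 1 + (k + 1) + 1 = N + 1 + k + 1 + 1 by omega, s2_succ_succ,
      s2_eq_stirlingAssocSum (N + 1) k, h, stirlingAssocSum_succ_succ,
      sum_assocCyc_succ_eq_mul_stirlingAssocSum]

lemma stirlingAssocSum_eq_sum_range_reflect (N k : ℕ) :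
    stirlingAssocSum N k = ∑ f ∈ range (N + k + 1),
      (-1) ^ (f - k) * ((2 * N + k + k - f).choose k : ℤ) *
        assocCyc (2 * N + k - f) (N + k - f) := by
  rw [stirlingAssocSum]
  calc _ = ∑ u ∈ range (N + k + 1),
        (-1) ^ (N - u) * ((N + k + u).choose k : ℤ) * assocCyc (N + u) u := by
        refine sum_subset (range_subset_range.2 (by omega)) fun u hu hu' => ?_
        rw [mem_range] at hu hu'
        simp [assocCyc_eq_zero_of_lt_two_mul (show N + u < 2 * u by omega)]
    _ = _ := by
        rw [← sum_range_reflect]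
        refine sum_congr rfl fun f hf => ?_
        have hf := mem_range.1 hf
        rw [show N - (N + k + 1 - 1 - f) = f - k by omega,
          show N + k + (N + k + 1 - 1 - f) = 2 * N + k + k - f by omega,
          show N + (N + k + 1 - 1 - f) = 2 * N + k - f by omega,
          show N + k + 1 - 1 - f = N + k - f by omega]

/-- Partition types of `M` with `C` parts, as multiplicity vectors of length `L`; for `L < M`
the parts larger than `L` are missing. -/
def ptypesIn (L M C : ℕ) : Finset (Fin L → ℕ) :=
  (Fintype.piFinset fun _ : Fin L => range (M + 1)).filter
    fun r => ∑ i, r i = C ∧ ∑ i, (i.1 + 1) * r i = M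

/-- The order `z_r` of the centralizer of a permutation of cycle type `r`. -/
def centralizerOrder {L : ℕ} (r : Fin L → ℕ) : ℕ :=
  ∏ i, (r i)! * (i.1 + 1) ^ (r i)

def derangementTypes (L M C : ℕ) : Finset (Fin L → ℕ) :=
  (ptypesIn L M C).filter (firstEntry · = 0)

def derangementWeight (L M C : ℕ) : ℚ :=
  ∑ r ∈ derangementTypes L M C, ((centralizerOrder r : ℕ) : ℚ)⁻¹

section PartitionTypes

variable {L M C : ℕ}

lemma ptypes_eq_ptypesIn (M C : ℕ) : ptypes M C = ptypesIn M M C := rfl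

lemma mul_apply_le_of_sum_eq {r : Fin L → ℕ} (h : ∑ i, (i.1 + 1) * r i = M) (i : Fin L) :
    (i.1 + 1) * r i ≤ M :=
  h ▸ single_le_sum (f := fun i => (i.1 + 1) * r i) (fun _ _ => Nat.zero_le _) (mem_univ i)

lemma mem_ptypesIn {r : Fin L → ℕ} :
    r ∈ ptypesIn L M C ↔ ∑ i, r i = C ∧ ∑ i, (i.1 + 1) * r i = M := by
  simp only [ptypesIn, mem_filter, Fintype.mem_piFinset, mem_range, and_iff_right_iff_imp]
  rintro ⟨-, h⟩ i
  have := mul_apply_le_of_sum_eq h i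
  nlinarith

lemma sum_add_single (r : Fin L → ℕ) (i : Fin L) (v : ℕ) :
    ∑ t, (r + Pi.single i v : Fin L → ℕ) t = ∑ t, r t + v := by
  simp [sum_add_distrib]

lemma sum_mul_add_single (r : Fin L → ℕ) (i : Fin L) (v : ℕ) :
    ∑ t, (t.1 + 1) * (r + Pi.single i v : Fin L → ℕ) t
      = ∑ t, (t.1 + 1) * r t + (i.1 + 1) * v := by
  simp [mul_add, sum_add_distrib, Pi.single_apply]

lemma map_add_single_ptypesIn (i : Fin L) (v : ℕ) :
    (ptypesIn L M C).map (addRightEmbedding (Pi.single i v))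
      = (ptypesIn L (M + (i.1 + 1) * v) (C + v)).filter (v ≤ · i) := by
  ext r
  simp only [mem_map, mem_filter, mem_ptypesIn, addRightEmbedding_apply]
  constructor
  · rintro ⟨a, ⟨hC, hM⟩, rfl⟩
    refine ⟨⟨?_, ?_⟩, by simp⟩
    · rw [sum_add_single, hC]
    · rw [sum_mul_add_single, hM]
  · rintro ⟨⟨hC, hM⟩, hv⟩
    have hr : r - Pi.single i v + Pi.single i v = r := by
      ext t
      rcases eq_or_ne t i with rfl | ht
      · simp [Nat.sub_add_cancel hv]
      · simp [ht]
    rw [← hr, sum_add_single] at hC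
    rw [← hr, sum_mul_add_single] at hM
    exact ⟨r - Pi.single i v, ⟨by omega, by omega⟩, hr⟩

lemma firstEntry_add (r s : Fin L → ℕ) : firstEntry (r + s) = firstEntry r + firstEntry s :=
  sum_add_distrib

lemma firstEntry_single (i : Fin L) (v : ℕ) :
    firstEntry (Pi.single i v : Fin L → ℕ) = if i.1 = 0 then v else 0 := by
  simp [firstEntry, sum_pi_single']

lemma apply_eq_zero_of_firstEntry_eq_zero {r : Fin L → ℕ} (h : firstEntry r = 0) {i : Fin L}
    (hi : i.1 = 0) : r i = 0 :=
  sum_eq_zero_iff.1 h i (by simp [hi])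

lemma firstEntry_eq_apply_zero (r : Fin (L + 1) → ℕ) : firstEntry r = r 0 := by
  rw [firstEntry, sum_eq_single_of_mem 0 (by simp)]
  intro i hi hi0
  exact absurd (Fin.ext (by simpa using hi)) hi0

lemma firstEntry_le_sum (r : Fin L → ℕ) : firstEntry r ≤ ∑ i, r i :=
  sum_le_sum_of_subset (filter_subset _ _)

lemma centralizerOrder_pos (r : Fin L → ℕ) : 0 < centralizerOrder r :=
  prod_pos fun i _ => by positivity

lemma centralizerOrder_add_single_mul (r : Fin L → ℕ) (i : Fin L) (v : ℕ) :
    centralizerOrder (r + Pi.single i v) * ((r i)! * (i.1 + 1) ^ r i)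
      = centralizerOrder r * ((r i + v)! * (i.1 + 1) ^ (r i + v)) := by
  simp only [centralizerOrder, ← mul_prod_erase univ _ (mem_univ i)]
  rw [prod_congr rfl fun t ht => by
    rw [Pi.add_apply, Pi.single_eq_of_ne (ne_of_mem_erase ht), add_zero]]
  simp only [Pi.add_apply, Pi.single_eq_same]
  ring

lemma centralizerOrder_add_single_one (r : Fin L → ℕ) (i : Fin L) :
    centralizerOrder (r + Pi.single i 1) = (i.1 + 1) * (r i + 1) * centralizerOrder r := by
  have h := centralizerOrder_add_single_mul r i 1
  rw [Nat.factorial_succ, pow_succ] at h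
  refine Nat.eq_of_mul_eq_mul_right (by positivity : 0 < (r i)! * (i.1 + 1) ^ r i) ?_
  linarith

lemma centralizerOrder_add_single_of_eq_zero {r : Fin L → ℕ} {i : Fin L} (h : r i = 0)
    (v : ℕ) :
    centralizerOrder (r + Pi.single i v) = v ! * (i.1 + 1) ^ v * centralizerOrder r := by
  simpa [h, mul_comm] using centralizerOrder_add_single_mul r i v

lemma mem_derangementTypes {r : Fin L → ℕ} :
    r ∈ derangementTypes L M C ↔
      ∑ i, r i = C ∧ ∑ i, (i.1 + 1) * r i = M ∧ firstEntry r = 0 := by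
  rw [derangementTypes, mem_filter, mem_ptypesIn, and_assoc]

lemma derangementWeight_zero_zero : derangementWeight L 0 0 = 1 := by
  have : derangementTypes L 0 0 = {0} := by
    ext r
    simp only [mem_derangementTypes, mem_singleton]
    constructor
    · rintro ⟨-, h, -⟩
      ext i
      simpa using mul_apply_le_of_sum_eq h i
    · rintro rfl
      simp [firstEntry]
  simp [derangementWeight, this, centralizerOrder]

lemma derangementWeight_zero_right (hM : 0 < M) : derangementWeight L M 0 = 0 := by
  refine sum_eq_zero fun r hr => ?_
  obtain ⟨hC, hM', -⟩ := mem_derangementTypes.1 hr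
  simp_all [sum_eq_zero_iff]

lemma derangementWeight_eq_zero_of_lt_two_mul (h : M < 2 * C) : derangementWeight L M C = 0 := by
  refine sum_eq_zero fun r hr => absurd h ?_
  obtain ⟨hC, hM, h0⟩ := mem_derangementTypes.1 hr
  rw [not_lt, ← hC, ← hM, mul_sum]
  refine sum_le_sum fun i _ => ?_
  rcases Nat.eq_zero_or_pos i.1 with hi | hi
  · simp [apply_eq_zero_of_firstEntry_eq_zero h0 hi]
  · exact Nat.mul_le_mul_right _ (by omega)

lemma map_add_single_derangementTypes {i : Fin L} (hi : i.1 ≠ 0) :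
    (derangementTypes L M C).map (addRightEmbedding (Pi.single i 1))
      = (derangementTypes L (M + (i.1 + 1)) (C + 1)).filter (1 ≤ · i) := by
  have hfirst : ∀ r : Fin L → ℕ, firstEntry (r + Pi.single i 1) = firstEntry r := by
    simp [firstEntry_add, firstEntry_single, hi]
  rw [derangementTypes, derangementTypes, filter_comm, ← mul_one (i.1 + 1),
    ← map_add_single_ptypesIn, filter_map]
  simp only [Function.comp_def, addRightEmbedding_apply, hfirst]

lemma sum_mul_apply_mul_inv_centralizerOrder {i : Fin L} (hi : i.1 ≠ 0) :
    ∑ r ∈ derangementTypes L (M + (i.1 + 1)) (C + 1),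
        ((i.1 + 1) * r i : ℚ) * ((centralizerOrder r : ℕ) : ℚ)⁻¹
      = derangementWeight L M C := by
  rw [← sum_filter_of_ne (p := (1 ≤ · i)) fun r _ hr => Nat.one_le_iff_ne_zero.2 fun h0 => by
      simp [h0] at hr, ← map_add_single_derangementTypes hi, sum_map, derangementWeight]
  refine sum_congr rfl fun r _ => ?_
  rw [addRightEmbedding_apply, centralizerOrder_add_single_one]
  have := centralizerOrder_pos r
  simp only [Pi.add_apply, Pi.single_eq_same, Nat.cast_mul, Nat.cast_add, Nat.cast_one]
  field_simp

lemma sum_mul_apply_mul_inv_centralizerOrder_eq_ite (i : Fin L) :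
    ∑ r ∈ derangementTypes L M (C + 1),
        ((i.1 + 1) * r i : ℚ) * ((centralizerOrder r : ℕ) : ℚ)⁻¹
      = if 1 ≤ i.1 ∧ i.1 < M then derangementWeight L (M - (i.1 + 1)) C else 0 := by
  split_ifs with h
  · obtain ⟨M, rfl⟩ : ∃ M', M = M' + (i.1 + 1) := ⟨M - (i.1 + 1), by omega⟩
    rw [Nat.add_sub_cancel]
    exact sum_mul_apply_mul_inv_centralizerOrder (by omega)
  · refine sum_eq_zero fun r hr => ?_
    obtain ⟨-, hM, h0⟩ := mem_derangementTypes.1 hr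
    have hri : r i = 0 := by
      rcases Nat.eq_zero_or_pos i.1 with hi | hi
      · exact apply_eq_zero_of_firstEntry_eq_zero h0 hi
      · have := mul_apply_le_of_sum_eq hM i
        by_contra hne
        have : i.1 + 1 ≤ (i.1 + 1) * r i := Nat.le_mul_of_pos_right _ (Nat.pos_of_ne_zero hne)
        omega
    simp [hri]

lemma mul_derangementWeight_succ (hML : M ≤ L) :
    (M : ℚ) * derangementWeight L M (C + 1)
      = ∑ s ∈ range (M - 1), derangementWeight L (M - 2 - s) C := by
  calc (M : ℚ) * derangementWeight L M (C + 1)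
      = ∑ r ∈ derangementTypes L M (C + 1),
          ∑ i, ((i.1 + 1) * r i : ℚ) * ((centralizerOrder r : ℕ) : ℚ)⁻¹ := by
        rw [derangementWeight, mul_sum]
        refine sum_congr rfl fun r hr => ?_
        rw [← sum_mul]
        congr 1
        exact_mod_cast (mem_derangementTypes.1 hr).2.1.symm
    _ = ∑ i ∈ range L,
          if 1 ≤ i ∧ i < M then derangementWeight L (M - (i + 1)) C else 0 := by
        rw [sum_comm, ← Fin.sum_univ_eq_sum_range
          (fun i => if 1 ≤ i ∧ i < M then derangementWeight L (M - (i + 1)) C else 0)]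
        exact sum_congr rfl fun i _ => sum_mul_apply_mul_inv_centralizerOrder_eq_ite i
    _ = ∑ i ∈ Ico 1 M, derangementWeight L (M - (i + 1)) C := by
        rw [← sum_filter]
        congr 1
        ext i
        simp only [mem_filter, mem_range, mem_Ico]
        omega
    _ = ∑ s ∈ range (M - 1), derangementWeight L (M - 2 - s) C := by
        rw [sum_Ico_eq_sum_range]
        exact sum_congr rfl fun s _ => by congr 1; omega

lemma add_two_mul_derangementWeight (hML : M + 2 ≤ L) :
    (M + 2 : ℚ) * derangementWeight L (M + 2) (C + 1)
      = derangementWeight L M C + (M + 1 : ℚ) * derangementWeight L (M + 1) (C + 1) := by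
  have h2 := mul_derangementWeight_succ (C := C) hML
  have h1 := mul_derangementWeight_succ (C := C) (show M + 1 ≤ L by omega)
  push_cast at h1 h2
  rw [h2, h1, sum_range_succ', Nat.sub_zero, add_comm]
  exact congrArg₂ _ rfl (sum_congr rfl fun s _ => by congr 1; omega)

theorem factorial_mul_derangementWeight :
    ∀ {M C : ℕ}, M ≤ L → (M ! : ℚ) * derangementWeight L M C = assocCyc M C
  | 0, 0, _ => by simp [derangementWeight_zero_zero, assocCyc]
  | 0, C + 1, _ => by
    simp [derangementWeight_eq_zero_of_lt_two_mul (show 0 < 2 * (C + 1) by omega), assocCyc]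
  | 1, 0, _ => by simp [derangementWeight_zero_right, assocCyc]
  | 1, C + 1, _ => by
    simp [derangementWeight_eq_zero_of_lt_two_mul (show 1 < 2 * (C + 1) by omega), assocCyc]
  | _ + 2, 0, _ => by simp [derangementWeight_zero_right, assocCyc]
  | M + 2, C + 1, h => by
    have ih₁ := factorial_mul_derangementWeight (M := M + 1) (C := C + 1) (by omega)
    have ih₀ := factorial_mul_derangementWeight (M := M) (C := C) (by omega)
    have hrec := add_two_mul_derangementWeight (C := C) h
    rw [assocCyc, Nat.factorial_succ, Nat.factorial_succ]
    rw [Nat.factorial_succ] at ih₁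
    push_cast at ih₁ ih₀ ⊢
    linear_combination ((M + 1 : ℚ) * M !) * hrec + (M + 1 : ℚ) * ih₁ + (M + 1 : ℚ) * ih₀

lemma filter_firstEntry_ptypesIn_eq_map {f : ℕ} :
    (ptypesIn (L + 1) (M + f) (C + f)).filter (firstEntry · = f)
      = (derangementTypes (L + 1) M C).map (addRightEmbedding (Pi.single 0 f)) := by
  have hfirst : ∀ r : Fin (L + 1) → ℕ, firstEntry (r + Pi.single 0 f) = firstEntry r + f := by
    simp [firstEntry_add, firstEntry_single]
  have hM : M + f = M + ((0 : Fin (L + 1)).1 + 1) * f := by simp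
  have hcomp : (ptypesIn (L + 1) M C).filter (firstEntry · = 0) = (ptypesIn (L + 1) M C).filter
      ((firstEntry · = f) ∘ addRightEmbedding (Pi.single 0 f)) :=
    filter_congr fun r _ => by simp [hfirst]
  rw [derangementTypes, hcomp, ← filter_map, map_add_single_ptypesIn, ← hM, filter_filter]
  refine filter_congr fun r _ => ?_
  rw [firstEntry_eq_apply_zero]
  omega

lemma sum_filter_firstEntry_inv_centralizerOrder {f : ℕ} :
    ∑ r ∈ (ptypesIn (L + 1) (M + f) (C + f)).filter (firstEntry · = f),
        ((centralizerOrder r : ℕ) : ℚ)⁻¹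
      = derangementWeight (L + 1) M C / f ! := by
  rw [filter_firstEntry_ptypesIn_eq_map, sum_map, derangementWeight, sum_div]
  refine sum_congr rfl fun r hr => ?_
  have hr0 : r 0 = 0 := by
    simpa [firstEntry_eq_apply_zero] using (mem_derangementTypes.1 hr).2.2
  rw [addRightEmbedding_apply, centralizerOrder_add_single_of_eq_zero hr0]
  simp [div_eq_mul_inv, mul_comm]

end PartitionTypes

lemma sum_ptypes_eq_sum_choose_mul_assocCyc {m j : ℕ} (hjm : j ≤ m) (g : ℕ → ℚ) :
    ∑ r ∈ ptypes m j, g (firstEntry r) *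
        (((∑ i, (i.1 + 1) * r i)! : ℕ) / ((centralizerOrder r : ℕ) : ℚ))
      = ∑ f ∈ range (j + 1), g f * (m.choose f * assocCyc (m - f) (j - f)) := by
  rcases m with _ | L
  · obtain rfl : j = 0 := by omega
    rw [show ptypes 0 0 = {0} by decide]
    simp [firstEntry, centralizerOrder, assocCyc]
  have hmaps (r : Fin (L + 1) → ℕ) (hr : r ∈ ptypes (L + 1) j) :
      firstEntry r ∈ range (j + 1) :=
    mem_range.2 (Nat.lt_succ_of_le ((firstEntry_le_sum r).trans_eq (mem_ptypesIn.1 hr).1))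
  rw [← sum_fiberwise_of_maps_to hmaps]
  refine sum_congr rfl fun f hf => ?_
  have hfj : f ≤ j := Nat.le_of_lt_succ (mem_range.1 hf)
  have hfm : f ≤ L + 1 := hfj.trans hjm
  obtain ⟨C, rfl⟩ := Nat.exists_eq_add_of_le' hfj
  have hM : ptypes (L + 1) (C + f) = ptypesIn (L + 1) (L + 1 - f + f) (C + f) := by
    rw [Nat.sub_add_cancel hfm, ptypes_eq_ptypesIn]
  calc _ = ∑ r ∈ (ptypes (L + 1) (C + f)).filter (firstEntry · = f),
        g f * (L + 1)! * ((centralizerOrder r : ℕ) : ℚ)⁻¹ := by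
        refine sum_congr rfl fun r hr => ?_
        obtain ⟨hr, rfl⟩ := mem_filter.1 hr
        rw [(mem_ptypesIn.1 hr).2, div_eq_mul_inv, mul_assoc]
    _ = g f * (L + 1)! * (derangementWeight (L + 1) (L + 1 - f) C / f !) := by
        rw [← mul_sum, hM, sum_filter_firstEntry_inv_centralizerOrder]
    _ = _ := by
        rw [Nat.add_sub_cancel, ← factorial_mul_derangementWeight (Nat.sub_le (L + 1) f),
          Nat.cast_choose ℚ hfm]
        field_simp

lemma choose_div_choose_mul_choose {m k f : ℕ} (hf : f ≤ m) :
    ((m + k).choose k : ℚ) / (m + k).choose f * m.choose f = (m + k - f).choose k := by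
  have h₁ := Nat.choose_mul (n := m + k) (k := k + f) (s := k) (by omega)
  have h₂ := Nat.choose_mul (n := m + k) (k := k + f) (s := f) (by omega)
  rw [Nat.add_sub_cancel_left, Nat.add_sub_cancel, Nat.choose_symm_add] at h₁
  rw [Nat.add_sub_cancel, h₁] at h₂
  have hpos : ((m + k).choose f : ℚ) ≠ 0 := by exact_mod_cast (Nat.choose_pos (by omega)).ne'
  rw [div_mul_eq_mul_div, div_eq_iff hpos]
  exact_mod_cast h₂.trans (mul_comm _ _)

theorem s2_as_signed_ptype_sum (n k : ℕ) (hk : 1 ≤ k) (hkn : k ≤ n) :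
    (s2 n k : ℚ) = ∑ r ∈ ptypes (2 * n - 1 - k) (n - 1),
      (-1 : ℚ) ^ (firstEntry r - (k - 1)) *
        (((2 * n - 2).choose (k - 1) : ℚ) / ((2 * n - 2).choose (firstEntry r) : ℚ)) *
        (((∑ i, (i.1 + 1) * r i).factorial : ℚ) /
          ((∏ i, (r i).factorial * (i.1 + 1) ^ (r i) : ℕ) : ℚ)) := by
  obtain ⟨k, rfl⟩ : ∃ k', k = k' + 1 := ⟨k - 1, by omega⟩
  obtain ⟨N, rfl⟩ : ∃ N, n = N + k + 1 := ⟨n - (k + 1), by omega⟩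
  rw [show 2 * (N + k + 1) - 1 - (k + 1) = 2 * N + k by omega,
    show 2 * (N + k + 1) - 2 = 2 * N + k + k by omega, Nat.add_sub_cancel, Nat.add_sub_cancel,
    s2_eq_stirlingAssocSum, stirlingAssocSum_eq_sum_range_reflect]
  calc _ = ∑ f ∈ range (N + k + 1), (-1 : ℚ) ^ (f - k) *
        (((2 * N + k + k).choose k : ℚ) / ((2 * N + k + k).choose f : ℚ)) *
        ((2 * N + k).choose f * assocCyc (2 * N + k - f) (N + k - f)) := by
        push_cast
        refine sum_congr rfl fun f hf => ?_
        rw [← choose_div_choose_mul_choose (by simp at hf; omega)]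
        ring
    _ = _ := (sum_ptypes_eq_sum_choose_mul_assocCyc (by omega) fun f => (-1 : ℚ) ^ (f - k) *
        (((2 * N + k + k).choose k : ℚ) / ((2 * N + k + k).choose f : ℚ))).symm
end
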